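/- arXiv:2104.07027 — 6 statements merged into one kernel-verified Lean document; each statement's English description precedes it below -/
import Mathlib

section
/- Let n ≥ 1, p ∈ (0,∞), and let U ∈ Mₙ(ℂ) be a unitary matrix with ‖U − I‖ ≤ 1 (operator norm). Then √3·‖U − I‖_p ≤ ‖U² − I‖_p. -/
open Matrix
open scoped ComplexOrder

/-- The normalized trace `L^p`-(quasi-)norm `(τ(|A|^p))^{1/p}` of a complex matrix,
computed via the eigenvalues of `Aᴴ * A`: the eigenvalues of `|A|^p` are the
`(p/2)`-th powers of those of `Aᴴ * A`, and the trace of a Hermitian matrix is the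
sum of its eigenvalues. -/
noncomputable def lpnorm {m : Type*} [Fintype m] [DecidableEq m] (p : ℝ)
    (A : Matrix m m ℂ) : ℝ :=
  ((∑ i, ((Matrix.posSemidef_conjTranspose_mul_self A).isHermitian.eigenvalues i) ^ (p / 2)) /
      (Fintype.card m : ℝ)) ^ (1 / p)

/-- The `ℓ² → ℓ²` operator norm of a complex matrix. -/
noncomputable def l2opNorm {m : Type*} [Fintype m] [DecidableEq m]
    (A : Matrix m m ℂ) : ℝ :=
  ‖Matrix.toEuclideanCLM (𝕜 := ℂ) A‖

/-!
For unitary `U` put `B = |U - 1|²`. Then `|U² - 1|² = 4B - B² = f(B)` with `f x = 4x - x²`,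
so the eigenvalues of `|U² - 1|²` are the `f(λ)` for the eigenvalues `λ` of `B`, which lie in
`[0, 1]` because `‖U - 1‖ ≤ 1`. On `[0, 1]` we have `f(λ) ≥ 3λ`; raising to the power `p/2`
and summing gives `3^{p/2} ‖U - 1‖_p^p ≤ ‖U² - 1‖_p^p`.
-/

lemma Unitary.star_mul_self_sq_sub_one {R : Type*} [Ring R] [StarRing R] {u : R}
    (hu : u ∈ unitary R) :
    star (u * u - 1) * (u * u - 1) =
      4 * (star (u - 1) * (u - 1)) - (star (u - 1) * (u - 1)) ^ 2 := by
  obtain ⟨h1, h2⟩ := Unitary.mem_iff.mp hu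
  have h12 : star u * star u * (u * u) = 1 := by
    rw [mul_assoc, ← mul_assoc (star u) u, h1, one_mul, h1]
  -- `noncomm_ring` treats numerals other than `1` as atoms, so they are spelled as sums of `1`.
  set s := u + star u
  have hb : star (u - 1) * (u - 1) = 1 + 1 - s := by
    simp only [s, star_sub, star_one, sub_mul, mul_sub, h1]
    noncomm_ring
  have hc : star (u * u - 1) * (u * u - 1) = 1 + 1 + 1 + 1 - s * s := by
    simp only [s, star_sub, star_one, star_mul, sub_mul, mul_sub, add_mul, mul_add, h1, h2, h12]
    noncomm_ring
  rw [hb, hc, show (4 : R) = 1 + 1 + 1 + 1 by norm_num]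
  noncomm_ring

namespace Matrix.IsHermitian

variable {𝕜 n : Type*} [RCLike 𝕜] [Fintype n] [DecidableEq n] {A B : Matrix n n 𝕜}

lemma map_eigenvalues_cfc (hA : A.IsHermitian) (f : ℝ → ℝ) (hB : (cfc f A).IsHermitian) :
    Finset.univ.val.map hB.eigenvalues = Finset.univ.val.map (f ∘ hA.eigenvalues) := by
  have h := congrArg Polynomial.roots (hA.charpoly_cfc_eq f)
  rw [hB.roots_charpoly_eq_eigenvalues, Polynomial.roots_prod _ _
    (by simp [Finset.prod_ne_zero_iff, Polynomial.X_sub_C_ne_zero])] at h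
  apply Multiset.map_injective (RCLike.ofReal_injective (K := 𝕜))
  simpa [Multiset.map_map, Function.comp_def] using h

lemma sum_eigenvalues_of_eq_cfc (hA : A.IsHermitian) (hB : B.IsHermitian) {f : ℝ → ℝ}
    (hBA : B = cfc f A) (g : ℝ → ℝ) :
    ∑ i, g (hB.eigenvalues i) = ∑ i, g (f (hA.eigenvalues i)) := by
  subst hBA
  simpa [Multiset.map_map] using congrArg (fun s ↦ (s.map g).sum) (hA.map_eigenvalues_cfc f hB)

open scoped Matrix.Norms.L2Operator in
lemma abs_eigenvalues_le_norm_toEuclideanCLM (hA : A.IsHermitian) (i : n) :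
    |hA.eigenvalues i| ≤ ‖toEuclideanCLM (n := n) (𝕜 := 𝕜) A‖ := by
  have : Nonempty n := ⟨i⟩
  have hmem : (hA.eigenvalues i : 𝕜) ∈ spectrum 𝕜 A :=
    spectrum.algebraMap_mem 𝕜 (hA.eigenvalues_mem_spectrum_real i)
  have h := spectrum.norm_le_norm_of_mem hmem
  rwa [RCLike.norm_ofReal] at h

end Matrix.IsHermitian

open scoped Matrix.Norms.L2Operator in
lemma Matrix.eigenvalues_conjTranspose_mul_self_le {𝕜 n : Type*} [RCLike 𝕜] [Fintype n]
    [DecidableEq n] (A : Matrix n n 𝕜) (i : n) :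
    (posSemidef_conjTranspose_mul_self A).isHermitian.eigenvalues i ≤
      ‖toEuclideanCLM (n := n) (𝕜 := 𝕜) A‖ ^ 2 := by
  have h :=
    (posSemidef_conjTranspose_mul_self A).isHermitian.abs_eigenvalues_le_norm_toEuclideanCLM i
  rw [← cstar_norm_def, l2_opNorm_conjTranspose_mul_self] at h
  exact (le_abs_self _).trans (h.trans_eq (sq _).symm)

lemma mul_lpnorm_le_lpnorm {m : Type*} [Fintype m] [DecidableEq m] {p c : ℝ} (hp : 0 < p)
    (hc : 0 ≤ c) {A B : Matrix m m ℂ}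
    (h : c ^ p * ∑ i, (posSemidef_conjTranspose_mul_self A).isHermitian.eigenvalues i ^ (p / 2)
      ≤ ∑ i, (posSemidef_conjTranspose_mul_self B).isHermitian.eigenvalues i ^ (p / 2)) :
    c * lpnorm p A ≤ lpnorm p B := by
  have hA := posSemidef_conjTranspose_mul_self A
  have hS : 0 ≤ ∑ i, hA.isHermitian.eigenvalues i ^ (p / 2) :=
    Finset.sum_nonneg fun i _ ↦ Real.rpow_nonneg (hA.eigenvalues_nonneg i) _
  rw [lpnorm, lpnorm]
  conv_lhs => rw [← Real.rpow_rpow_inv hc hp.ne', ← one_div,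
    ← Real.mul_rpow (by positivity) (by positivity), ← mul_div_assoc]
  gcongr

theorem stmt3_general (n : ℕ) (p : ℝ) (hp : 0 < p)
    (U : Matrix (Fin n) (Fin n) ℂ) (hU : U ∈ Matrix.unitaryGroup (Fin n) ℂ)
    (h : l2opNorm (U - 1) ≤ 1) :
    Real.sqrt 3 * lpnorm p (U - 1) ≤ lpnorm p (U * U - 1) := by
  have hB := posSemidef_conjTranspose_mul_self (U - 1)
  set B := (U - 1)ᴴ * (U - 1)
  have hCB : (U * U - 1)ᴴ * (U * U - 1) = cfc (fun x : ℝ ↦ 4 * x - x ^ 2) B := by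
    have hBsa : IsSelfAdjoint B := hB.isHermitian
    rw [cfc_sub _ _ B, cfc_const_mul_id (4 : ℝ) B, cfc_pow_id B 2, ofNat_smul_eq_nsmul,
      nsmul_eq_mul]
    exact Unitary.star_mul_self_sq_sub_one hU
  have hB1 (i : Fin n) : hB.isHermitian.eigenvalues i ≤ 1 :=
    (eigenvalues_conjTranspose_mul_self_le (U - 1) i).trans (pow_le_one₀ (norm_nonneg _) h)
  apply mul_lpnorm_le_lpnorm hp (Real.sqrt_nonneg 3)
  rw [hB.isHermitian.sum_eigenvalues_of_eq_cfc (posSemidef_conjTranspose_mul_self _).isHermitian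
    hCB (· ^ (p / 2)), Real.sqrt_eq_rpow, ← Real.rpow_mul (by norm_num), Finset.mul_sum]
  gcongr with i
  have hx0 := hB.eigenvalues_nonneg i
  rw [one_div_mul_eq_div, ← Real.mul_rpow (by norm_num) hx0]
  gcongr
  nlinarith [hB1 i]

/-- If `U` is unitary with `‖U − I‖ ≤ 1` (operator norm), then
`√3·‖U − I‖_p ≤ ‖U² − I‖_p`. -/
theorem stmt3 (n : ℕ) (hn : 1 ≤ n) (p : ℝ) (hp : 0 < p)
    (U : Matrix (Fin n) (Fin n) ℂ) (hU : U ∈ Matrix.unitaryGroup (Fin n) ℂ)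
    (h : l2opNorm (U - 1) ≤ 1) :
    Real.sqrt 3 * lpnorm p (U - 1) ≤ lpnorm p (U * U - 1) :=
  stmt3_general n p hp U hU h
end

section
/- Let n ≥ 1, p ∈ (0,∞), and let P, Q ∈ Mₙ(ℂ) be orthogonal projections (P = Pᴴ = P², Q = Qᴴ = Q²). Then P·Q = 0 if and only if ‖P − Q‖_p^p = τ(P) + τ(Q). -/
open Matrix
open scoped ComplexOrder

/-! Let `M = (P - Q)ᴴ (P - Q)` with eigenvalues `tᵢ`, so that `n ‖P - Q‖_p^p = ∑ tᵢ ^ (p/2)`.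
Since `1 - M = (1 - P - Q)ᴴ (1 - P - Q)`, every `tᵢ` lies in `[0, 1]`, hence
`∑ tᵢ ^ (p/2) ≤ rank M ≤ rank P + rank Q = tr P + tr Q`, and equality forces every `tᵢ ∈ {0, 1}`,
i.e. `∑ tᵢ ^ (p/2) = tr M = tr P + tr Q - 2 Re tr (P Q)`. Finally `tr (P Q) = tr ((P Q)ᴴ (P Q))`
vanishes only if `P Q = 0`. Conversely, if `P Q = 0` then `M = P + Q` is a projection. -/

theorem Real.eq_zero_or_one_of_card_le_sum_rpow {ι : Type*} [Fintype ι] {t : ι → ℝ} {q : ℝ}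
    (hq : 0 < q) (h0 : ∀ i, 0 ≤ t i) (h1 : ∀ i, t i ≤ 1)
    (hcard : (Finset.univ.filter fun i => t i ≠ 0).card ≤ ∑ i, t i ^ q) (i : ι) :
    t i = 0 ∨ t i = 1 := by
  have hle : ∀ j, t j ^ q ≤ if t j ≠ 0 then 1 else 0 := by
    intro j
    split_ifs with hj
    · exact Real.rpow_le_one (h0 j) (h1 j) hq.le
    · rw [not_not.mp hj, Real.zero_rpow hq.ne']
  have hsum : ∑ j, t j ^ q = ∑ j, if t j ≠ 0 then (1 : ℝ) else 0 :=
    le_antisymm (Finset.sum_le_sum fun j _ => hle j) (by rwa [Finset.sum_boole])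
  have hi := (Finset.sum_eq_sum_iff_of_le fun j _ => hle j).mp hsum i (Finset.mem_univ i)
  by_cases hti : t i = 0
  · exact Or.inl hti
  · refine Or.inr ((h1 i).eq_or_lt.resolve_right fun hlt => ?_)
    have := Real.rpow_lt_one (h0 i) hlt hq
    simp only [ne_eq, hti, not_false_eq_true, if_true] at hi
    linarith

theorem Real.sum_rpow_eq_sum_of_eq_zero_or_one {ι : Type*} [Fintype ι] {t : ι → ℝ} {q : ℝ}
    (hq : q ≠ 0) (ht : ∀ i, t i = 0 ∨ t i = 1) : ∑ i, t i ^ q = ∑ i, t i := by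
  refine Finset.sum_congr rfl fun i _ => ?_
  rcases ht i with h | h <;> simp [h, Real.zero_rpow hq]

namespace IsStarProjection

variable {R : Type*} [Ring R] [StarRing R] {p q : R}

theorem star_sub_mul_sub (hp : IsStarProjection p) (hq : IsStarProjection q) :
    star (p - q) * (p - q) = p + q - p * q - q * p := by
  rw [star_sub, hp.isSelfAdjoint.star_eq, hq.isSelfAdjoint.star_eq, sub_mul, mul_sub, mul_sub,
    hp.isIdempotentElem.eq, hq.isIdempotentElem.eq]
  abel

theorem one_sub_star_sub_mul_sub (hp : IsStarProjection p) (hq : IsStarProjection q) :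
    1 - star (p - q) * (p - q) = star (1 - p - q) * (1 - p - q) := by
  have expand : (1 - p - q) * (1 - p - q) =
      1 - p - q - p + p * p + p * q - q + q * p + q * q := by
    noncomm_ring
  rw [hp.star_sub_mul_sub hq, star_sub, star_sub, star_one, hp.isSelfAdjoint.star_eq,
    hq.isSelfAdjoint.star_eq, expand, hp.isIdempotentElem.eq, hq.isIdempotentElem.eq]
  abel

theorem star_mul_mul (hp : IsStarProjection p) (hq : IsStarProjection q) :
    star (p * q) * (p * q) = q * (p * q) := by
  rw [star_mul, hp.isSelfAdjoint.star_eq, hq.isSelfAdjoint.star_eq, mul_assoc, ← mul_assoc p,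
    hp.isIdempotentElem.eq]

theorem mul_eq_zero_swap (hp : IsStarProjection p) (hq : IsStarProjection q) (h : p * q = 0) :
    q * p = 0 := by
  simpa [hp.isSelfAdjoint.star_eq, hq.isSelfAdjoint.star_eq] using congr(star $h)

end IsStarProjection

namespace Matrix

theorem rank_sub_le {m n K : Type*} [Fintype n] [Field K] (A B : Matrix m n K) :
    (A - B).rank ≤ A.rank + B.rank := by
  have hrange : LinearMap.range (A - B).mulVecLin ≤
      LinearMap.range A.mulVecLin ⊔ LinearMap.range B.mulVecLin := by
    rintro _ ⟨x, rfl⟩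
    rw [mulVecLin_apply, sub_mulVec]
    exact Submodule.sub_mem _ (Submodule.mem_sup_left ⟨x, rfl⟩) (Submodule.mem_sup_right ⟨x, rfl⟩)
  exact (Submodule.finrank_mono hrange).trans (Submodule.finrank_add_le_finrank_add_finrank _ _)

variable {m 𝕜 : Type*} [Fintype m] [DecidableEq m] [RCLike 𝕜]

namespace IsHermitian

variable {A : Matrix m m 𝕜}

theorem re_trace_eq_sum_eigenvalues (hA : A.IsHermitian) :
    RCLike.re A.trace = ∑ i, hA.eigenvalues i := by
  simp [hA.trace_eq_sum_eigenvalues]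

theorem eigenvalues_eq_zero_or_one (hA : A.IsHermitian) (h : IsIdempotentElem A) (i : m) :
    hA.eigenvalues i = 0 ∨ hA.eigenvalues i = 1 :=
  h.spectrum_subset ℝ (hA.eigenvalues_mem_spectrum_real i)

theorem eigenvalues_le_one (hA : A.IsHermitian) (h : (1 - A).PosSemidef) (i : m) :
    hA.eigenvalues i ≤ 1 := by
  have hmem : 1 - hA.eigenvalues i ∈ spectrum ℝ (1 - A) := by
    rw [← map_one (algebraMap ℝ (Matrix m m 𝕜)), ← spectrum.singleton_sub_eq]
    exact Set.sub_mem_sub rfl (hA.eigenvalues_mem_spectrum_real i)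
  obtain ⟨j, hj⟩ := h.isHermitian.spectrum_real_eq_range_eigenvalues ▸ hmem
  linarith [h.eigenvalues_nonneg j]

end IsHermitian

variable {P Q : Matrix m m 𝕜}

theorem rank_eq_re_trace_of_isStarProjection (hP : IsStarProjection P) :
    (P.rank : ℝ) = RCLike.re P.trace := by
  have hP_herm : P.IsHermitian := hP.isSelfAdjoint
  rw [hP_herm.re_trace_eq_sum_eigenvalues, hP_herm.rank_eq_card_non_zero_eigs,
    Fintype.card_subtype, ← Finset.sum_boole]
  refine Finset.sum_congr rfl fun i _ => ?_
  rcases hP_herm.eigenvalues_eq_zero_or_one hP.isIdempotentElem i with h | h <;> simp [h]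

theorem re_trace_conjTranspose_sub_mul_sub (hP : IsStarProjection P) (hQ : IsStarProjection Q) :
    RCLike.re ((P - Q)ᴴ * (P - Q)).trace =
      RCLike.re P.trace + RCLike.re Q.trace - 2 * RCLike.re (P * Q).trace := by
  rw [← star_eq_conjTranspose, hP.star_sub_mul_sub hQ, trace_sub, trace_sub, trace_add,
    trace_mul_comm Q P]
  simp only [map_sub, map_add]
  ring

theorem mul_eq_zero_iff_re_trace_mul_eq_zero (hP : IsStarProjection P) (hQ : IsStarProjection Q) :
    P * Q = 0 ↔ RCLike.re (P * Q).trace = 0 := by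
  refine ⟨fun h => by simp [h], fun h => ?_⟩
  have htr : ((P * Q)ᴴ * (P * Q)).trace = (P * Q).trace := by
    rw [← star_eq_conjTranspose, hP.star_mul_mul hQ, trace_mul_comm, mul_assoc,
      hQ.isIdempotentElem.eq]
  have him : RCLike.im (P * Q).trace = 0 :=
    htr ▸ (RCLike.nonneg_iff.mp (posSemidef_conjTranspose_mul_self (P * Q)).trace_nonneg).2
  rw [← trace_conjTranspose_mul_self_eq_zero_iff, htr]
  exact RCLike.ext (by simpa using h) (by simpa using him)

theorem mul_eq_zero_iff_sum_rpow_eigenvalues_eq (hP : IsStarProjection P)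
    (hQ : IsStarProjection Q) {q : ℝ} (hq : 0 < q) :
    P * Q = 0 ↔ ∑ i, (posSemidef_conjTranspose_mul_self (P - Q)).isHermitian.eigenvalues i ^ q =
      RCLike.re P.trace + RCLike.re Q.trace := by
  set hM := posSemidef_conjTranspose_mul_self (P - Q)
  have hsum : ∑ i, hM.isHermitian.eigenvalues i =
      RCLike.re P.trace + RCLike.re Q.trace - 2 * RCLike.re (P * Q).trace :=
    hM.isHermitian.re_trace_eq_sum_eigenvalues.symm.trans (re_trace_conjTranspose_sub_mul_sub hP hQ)
  constructor
  · intro hPQ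
    have hM_proj : IsStarProjection ((P - Q)ᴴ * (P - Q)) := by
      rw [← star_eq_conjTranspose, hP.star_sub_mul_sub hQ, hPQ, hP.mul_eq_zero_swap hQ hPQ,
        sub_zero, sub_zero]
      exact hP.add hQ hPQ
    rw [Real.sum_rpow_eq_sum_of_eq_zero_or_one hq.ne'
      (hM.isHermitian.eigenvalues_eq_zero_or_one hM_proj.isIdempotentElem), hsum, hPQ]
    simp
  · intro hS
    have hM_le_one : (1 - (P - Q)ᴴ * (P - Q)).PosSemidef := by
      rw [← star_eq_conjTranspose, hP.one_sub_star_sub_mul_sub hQ]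
      exact posSemidef_conjTranspose_mul_self _
    have hcard : ((Finset.univ.filter fun i => hM.isHermitian.eigenvalues i ≠ 0).card : ℝ) ≤
        ∑ i, hM.isHermitian.eigenvalues i ^ q := by
      rw [← Fintype.card_subtype, ← hM.isHermitian.rank_eq_card_non_zero_eigs,
        rank_conjTranspose_mul_self, hS, ← rank_eq_re_trace_of_isStarProjection hP,
        ← rank_eq_re_trace_of_isStarProjection hQ]
      exact_mod_cast rank_sub_le P Q
    have h01 := Real.eq_zero_or_one_of_card_le_sum_rpow hq hM.eigenvalues_nonneg
      (hM.isHermitian.eigenvalues_le_one hM_le_one) hcard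
    rw [mul_eq_zero_iff_re_trace_mul_eq_zero hP hQ]
    linarith [Real.sum_rpow_eq_sum_of_eq_zero_or_one hq.ne' h01]

end Matrix

theorem lpnorm_rpow {m : Type*} [Fintype m] [DecidableEq m] {p : ℝ} (hp : p ≠ 0)
    (A : Matrix m m ℂ) :
    lpnorm p A ^ p =
      (∑ i, (posSemidef_conjTranspose_mul_self A).isHermitian.eigenvalues i ^ (p / 2)) /
        (Fintype.card m : ℝ) := by
  have hsum := Finset.sum_nonneg fun i (_ : i ∈ Finset.univ) =>
    Real.rpow_nonneg ((posSemidef_conjTranspose_mul_self A).eigenvalues_nonneg i) (p / 2)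
  rw [lpnorm, ← Real.rpow_mul (div_nonneg hsum (Nat.cast_nonneg _)), one_div_mul_cancel hp,
    Real.rpow_one]

/-- For projections `P, Q ∈ Mₙ(ℂ)`: `P·Q = 0` iff `‖P − Q‖_p^p = τ(P) + τ(Q)`. -/
theorem stmt6 (n : ℕ) (hn : 1 ≤ n) (p : ℝ) (hp : 0 < p)
    (P Q : Matrix (Fin n) (Fin n) ℂ)
    (hP : Pᴴ = P) (hP2 : P * P = P) (hQ : Qᴴ = Q) (hQ2 : Q * Q = Q) :
    P * Q = 0 ↔ lpnorm p (P - Q) ^ p = P.trace.re / n + Q.trace.re / n := by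
  have hn0 : (n : ℝ) ≠ 0 := Nat.cast_ne_zero.mpr (by omega)
  rw [lpnorm_rpow hp.ne', Fintype.card_fin, ← add_div, div_left_inj' hn0]
  exact Matrix.mul_eq_zero_iff_sum_rpow_eigenvalues_eq ⟨hP2, hP⟩ ⟨hQ2, hQ⟩ (half_pos hp)
end

section
/- Let n ≥ 1 and β ∈ ℝ. Then there exist θ ∈ ℝ and self-adjoint unitary matrices U₁, …, U_{2n} ∈ M_{2ⁿ}(ℂ) such that e^{iβ}·E₁₁ + (I − E₁₁) = e^{iθ}·U₁·U₂·⋯·U_{2n}, i.e., the diagonal unitary diag(e^{iβ}, 1, …, 1) is e^{iθ} times a product of 2n self-adjoint unitaries. -/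
open Matrix
open scoped ComplexOrder

/-!
If `σ` is an involution and `u` takes values on the unit circle with `u ∘ σ = ū`, the matrix with
entry `u i` at `(i, σ i)` is a self-adjoint unitary, and its product with the permutation matrix
of `σ` is `diag u`. So it suffices to write `e^{-iθ} diag(e^{iβ}, 1, …, 1)` as `diag a · diag b`,
with `a` conjugate-symmetric along the pairs `{2j, 2j+1}` (the involution `σ`) and `b` along
the shifted pairs `{2j-1, 2j}` and `{N-1, 0}` (the involution `τ`). With `ω = e^{iθ}`,
`a = ω^α` and `b = ω^γ`, this asks for integers with `α ∘ σ = -α`, `γ ∘ τ = -γ` and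
`1 + α k + γ k = N·[k = 0]`; they exist because the pairs form a single cycle through all `N`
indices, and `θ = β / N` makes `ω^N = e^{iβ}`. For `N = 2` the phase `α` vanishes, so two
factors suffice; further factors are identities.
-/

section Symmetries

variable {ι : Type*} [Fintype ι] [DecidableEq ι]

def IsProdOfSymmetries (m : ℕ) (A : Matrix ι ι ℂ) : Prop :=
  ∃ U : Fin m → Matrix ι ι ℂ,
    (∀ i, U i ∈ unitaryGroup ι ℂ ∧ (U i)ᴴ = U i) ∧ (List.ofFn U).prod = A

namespace IsProdOfSymmetries

theorem one (m : ℕ) : IsProdOfSymmetries m (1 : Matrix ι ι ℂ) :=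
  ⟨fun _ => 1, fun _ => ⟨one_mem _, conjTranspose_one⟩, by simp⟩

theorem of_symmetry {S : Matrix ι ι ℂ} (hS : S ∈ unitaryGroup ι ℂ) (hS' : Sᴴ = S) :
    IsProdOfSymmetries 1 S :=
  ⟨fun _ => S, fun _ => ⟨hS, hS'⟩, by simp⟩

theorem mul {m k : ℕ} {A B : Matrix ι ι ℂ} (hA : IsProdOfSymmetries m A)
    (hB : IsProdOfSymmetries k B) : IsProdOfSymmetries (m + k) (A * B) := by
  obtain ⟨U, hU, rfl⟩ := hA
  obtain ⟨V, hV, rfl⟩ := hB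
  refine ⟨Fin.append U V, fun i => ?_, by simp⟩
  induction i using Fin.addCases <;> simp [hU, hV]

theorem mono {m k : ℕ} {A : Matrix ι ι ℂ} (hA : IsProdOfSymmetries m A) (hmk : m ≤ k) :
    IsProdOfSymmetries k A := by
  simpa [Nat.add_sub_cancel' hmk] using hA.mul (one (k - m))

end IsProdOfSymmetries

end Symmetries

theorem smul_single_add_one_sub_single {ι α : Type*} [DecidableEq ι] [Ring α]
    (i : ι) (c : α) :
    c • single i i (1 : α) + (1 - single i i 1) = diagonal (Function.update 1 i c) := by
  ext j k
  simp only [Matrix.add_apply, Matrix.sub_apply, Matrix.smul_apply, single_apply, one_apply,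
    diagonal_apply, Function.update_apply]
  split_ifs <;> aesop

section PairingMatrix

variable {ι : Type*} [DecidableEq ι] {σ : ι → ι}

def pairingMatrix (σ : ι → ι) (u : ι → Circle) : Matrix ι ι ℂ :=
  of fun i j => if j = σ i then (u i : ℂ) else 0

theorem pairingMatrix_mul_pairingMatrix [Fintype ι] (hσ : Function.Involutive σ)
    (u v : ι → Circle) :
    pairingMatrix σ u * pairingMatrix σ v = diagonal fun i => ((u i * v (σ i) : Circle) : ℂ) := by
  ext i j
  rw [mul_apply, Finset.sum_eq_single (σ i)]
  · simp [pairingMatrix, diagonal_apply, hσ i, eq_comm]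
  · intro k _ hk
    simp [pairingMatrix, hk]
  · simp

theorem conjTranspose_pairingMatrix (hσ : Function.Involutive σ) {u : ι → Circle}
    (hu : ∀ i, u (σ i) = (u i)⁻¹) : (pairingMatrix σ u)ᴴ = pairingMatrix σ u := by
  ext i j
  simp only [pairingMatrix, conjTranspose_apply, of_apply]
  by_cases h : j = σ i
  · subst h
    rw [hσ i, if_pos rfl, if_pos rfl, hu, Circle.coe_inv_eq_conj]
    exact Complex.conj_conj _
  · have h' : i ≠ σ j := fun h' => h (h' ▸ (hσ j).symm)
    simp [h, h']

theorem pairingMatrix_mem_unitaryGroup [Fintype ι] (hσ : Function.Involutive σ)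
    {u : ι → Circle} (hu : ∀ i, u (σ i) = (u i)⁻¹) : pairingMatrix σ u ∈ unitaryGroup ι ℂ := by
  rw [mem_unitaryGroup_iff, star_eq_conjTranspose, conjTranspose_pairingMatrix hσ hu,
    pairingMatrix_mul_pairingMatrix hσ]
  simp [hu]

theorem isProdOfSymmetries_two_diagonal [Fintype ι] (hσ : Function.Involutive σ)
    {u : ι → Circle} (hu : ∀ i, u (σ i) = (u i)⁻¹) :
    IsProdOfSymmetries 2 (diagonal fun i => (u i : ℂ)) := by
  have h1 : ∀ i, (1 : ι → Circle) (σ i) = ((1 : ι → Circle) i)⁻¹ := fun _ => by simp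
  have hprod := (IsProdOfSymmetries.of_symmetry (pairingMatrix_mem_unitaryGroup hσ hu)
    (conjTranspose_pairingMatrix hσ hu)).mul (IsProdOfSymmetries.of_symmetry
    (pairingMatrix_mem_unitaryGroup hσ h1) (conjTranspose_pairingMatrix hσ h1))
  simpa [pairingMatrix_mul_pairingMatrix hσ] using hprod

end PairingMatrix

def pairSwap (k : ℕ) : ℕ := if k % 2 = 0 then k + 1 else k - 1

def shiftedPairSwap (N k : ℕ) : ℕ :=
  if k = 0 then N - 1 else if k = N - 1 then 0 else if k % 2 = 0 then k - 1 else k + 1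

def pairPhase (k : ℕ) : ℤ := if k % 2 = 0 then -k else k - 1

def shiftedPairPhase (N k : ℕ) : ℤ := if k = 0 then N - 1 else if k % 2 = 0 then k - 1 else -k

theorem pairSwap_lt {N k : ℕ} (hN : Even N) (hk : k < N) : pairSwap k < N := by
  grind [pairSwap]

theorem pairSwap_involutive : Function.Involutive pairSwap := by
  grind [Function.Involutive, pairSwap]

theorem pairPhase_pairSwap (k : ℕ) : pairPhase (pairSwap k) = -pairPhase k := by
  grind [pairPhase, pairSwap]

theorem pairPhase_of_lt_two {k : ℕ} (hk : k < 2) : pairPhase k = 0 := by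
  grind [pairPhase]

theorem shiftedPairSwap_lt {N k : ℕ} (hk : k < N) : shiftedPairSwap N k < N := by
  grind [shiftedPairSwap]

theorem shiftedPairSwap_shiftedPairSwap {N k : ℕ} (hN : Even N) (hk : k < N) :
    shiftedPairSwap N (shiftedPairSwap N k) = k := by
  grind [shiftedPairSwap]

theorem shiftedPairPhase_shiftedPairSwap {N k : ℕ} (hN : Even N) (hk : k < N) :
    shiftedPairPhase N (shiftedPairSwap N k) = -shiftedPairPhase N k := by
  grind [shiftedPairPhase, shiftedPairSwap]

theorem one_add_pairPhase_add_shiftedPairPhase (N k : ℕ) :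
    1 + pairPhase k + shiftedPairPhase N k = if k = 0 then (N : ℤ) else 0 := by
  grind [pairPhase, shiftedPairPhase]

theorem Circle.exp_div_natCast_zpow {N : ℕ} (hN : N ≠ 0) (β : ℝ) :
    Circle.exp (β / N) ^ (N : ℤ) = Circle.exp β := by
  rw [← Circle.exp_intCast_mul]
  congr 1
  push_cast
  field_simp

theorem diagonal_update_eq_smul_diagonal_mul_diagonal {N : ℕ} (h0 : 0 < N) {ω c : Circle}
    (hω : ω ^ (N : ℤ) = c) :
    diagonal (Function.update 1 ⟨0, h0⟩ (c : ℂ)) =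
      (ω : ℂ) • (diagonal (fun k : Fin N => ((ω ^ pairPhase k : Circle) : ℂ)) *
        diagonal fun k : Fin N => ((ω ^ shiftedPairPhase N k : Circle) : ℂ)) := by
  rw [diagonal_mul_diagonal, ← diagonal_smul]
  congr 1
  ext k
  have hk : ω * (ω ^ pairPhase k * ω ^ shiftedPairPhase N k) =
      if (k : ℕ) = 0 then c else 1 :=
    calc ω * (ω ^ pairPhase k * ω ^ shiftedPairPhase N k)
        = ω ^ (1 + pairPhase k + shiftedPairPhase N k) := by
          rw [_root_.zpow_add, _root_.zpow_add, zpow_one, mul_assoc]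
      _ = _ := by
          rw [one_add_pairPhase_add_shiftedPairPhase]
          split_ifs
          · exact hω
          · exact zpow_zero ω
  rw [Pi.smul_apply, smul_eq_mul, ← Circle.coe_mul, ← Circle.coe_mul, hk, Function.update_apply]
  split_ifs <;> simp_all [Fin.ext_iff]

theorem exists_isProdOfSymmetries_smul_eq_diagonal_update {N m : ℕ} (hN : Even N)
    (h0 : 0 < N) (hm : 4 ≤ m ∨ N = 2 ∧ m = 2) (β : ℝ) :
    ∃ (θ : ℝ) (A : Matrix (Fin N) (Fin N) ℂ), IsProdOfSymmetries m A ∧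
      diagonal (Function.update 1 ⟨0, h0⟩ (Complex.exp (β * Complex.I))) =
        Complex.exp (θ * Complex.I) • A := by
  refine ⟨β / N, _, ?_,
    diagonal_update_eq_smul_diagonal_mul_diagonal h0 (Circle.exp_div_natCast_zpow h0.ne' β)⟩
  set ω := Circle.exp (β / N)
  let σ : Fin N → Fin N := fun k => ⟨pairSwap k, pairSwap_lt hN k.2⟩
  let τ : Fin N → Fin N := fun k => ⟨shiftedPairSwap N k, shiftedPairSwap_lt k.2⟩
  have hσ : Function.Involutive σ := fun k => Fin.ext (pairSwap_involutive k)
  have hτ : Function.Involutive τ := fun k => Fin.ext (shiftedPairSwap_shiftedPairSwap hN k.2)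
  have ha : IsProdOfSymmetries 2
      (diagonal fun k : Fin N => ((ω ^ pairPhase k : Circle) : ℂ)) :=
    isProdOfSymmetries_two_diagonal hσ fun k => by
      simp only [σ, pairPhase_pairSwap, _root_.zpow_neg]
  have hb : IsProdOfSymmetries 2
      (diagonal fun k : Fin N => ((ω ^ shiftedPairPhase N k : Circle) : ℂ)) :=
    isProdOfSymmetries_two_diagonal hτ fun k => by
      simp only [τ, shiftedPairPhase_shiftedPairSwap hN k.2, _root_.zpow_neg]
  rcases hm with hm | ⟨rfl, rfl⟩
  · exact (ha.mul hb).mono hm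
  · have ha1 : (diagonal fun k : Fin 2 => ((ω ^ pairPhase k : Circle) : ℂ)) = 1 := by
      rw [← diagonal_one]
      congr 1
      funext k
      simp [pairPhase_of_lt_two k.2]
    rwa [ha1, one_mul]

/-- `diag(e^{iβ}, 1, …, 1) ∈ M_{2ⁿ}(ℂ)` is `e^{iθ}` times a product of `2n`
self-adjoint unitaries. -/
theorem stmt12 (n : ℕ) (hn : 1 ≤ n) (β : ℝ) :
    ∃ (θ : ℝ) (U : Fin (2 * n) → Matrix (Fin (2 ^ n)) (Fin (2 ^ n)) ℂ),
      (∀ i, U i ∈ Matrix.unitaryGroup (Fin (2 ^ n)) ℂ ∧ (U i)ᴴ = U i) ∧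
      Complex.exp (β * Complex.I) •
          Matrix.single (⟨0, by positivity⟩ : Fin (2 ^ n))
            (⟨0, by positivity⟩ : Fin (2 ^ n)) (1 : ℂ) +
        (1 - Matrix.single (⟨0, by positivity⟩ : Fin (2 ^ n))
            (⟨0, by positivity⟩ : Fin (2 ^ n)) (1 : ℂ)) =
      Complex.exp (θ * Complex.I) • (List.ofFn U).prod := by
  have hm : 4 ≤ 2 * n ∨ 2 ^ n = 2 ∧ 2 * n = 2 := by
    rcases hn.eq_or_lt with rfl | hn
    · exact Or.inr ⟨rfl, rfl⟩
    · exact Or.inl (by omega)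
  obtain ⟨θ, A, ⟨U, hU, rfl⟩, hA⟩ :=
    exists_isProdOfSymmetries_smul_eq_diagonal_update
      ((Nat.even_pow' (by omega)).2 even_two) (by positivity) hm β
  exact ⟨θ, U, hU, by rw [smul_single_add_one_sub_single, hA]⟩
end

section
/- Let n ≥ 1, p ∈ (0,∞) with p ≠ 2, and let P, Q ∈ M_{2n}(ℂ) be projections with τ(P) = τ(Q) = 1/2 (τ the normalized trace on M_{2n}(ℂ)). Then ‖P − Q‖_p = ‖(I − P) − Q‖_p = 1/√2 if and only if there exists a partial isometry U ∈ M_{2n}(ℂ) with UᴴU = P, UUᴴ = I − P and Q = (I + U + Uᴴ)/2. -/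
/-!
Since `P` and `Q` are projections, `(P - Q)² + (1 - P - Q)² = 1`. Hence the eigenvalues of the
two positive matrices `(P - Q)²` and `(1 - P - Q)²` are `4n` nonnegative numbers of mean `1/2`,
and the two norm conditions say that their `p/2`-th powers have mean `(1/2)^(p/2)`. For `p ≠ 2`
the function `t ↦ t^(p/2)` is strictly convex or strictly concave, so by the equality case of
Jensen's inequality all these eigenvalues are `1/2`, i.e. `2 (P - Q)² = 1`. This relation is
exactly what makes `U = (2Q - 1)P` a partial isometry from `P` onto `1 - P` with
`2Q = 1 + U + Uᴴ`. Conversely, such a `U` satisfies `U P = U` and `P U = 0`, from which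
`2 (P - Q)² = 2 (1 - P - Q)² = 1` is a direct computation.
-/

open Matrix
open scoped ComplexOrder

section

variable {R : Type*} [Ring R] {P Q U : R}

theorem IsIdempotentElem.sub_mul_self_add_one_sub_sub_mul_self (hP : IsIdempotentElem P)
    (hQ : IsIdempotentElem Q) : (P - Q) * (P - Q) + (1 - P - Q) * (1 - P - Q) = 1 := by
  have hP : P * P = P := hP
  have hQ : Q * Q = Q := hQ
  calc (P - Q) * (P - Q) + (1 - P - Q) * (1 - P - Q)
      = 1 + (P * P - P) + (P * P - P) + (Q * Q - Q) + (Q * Q - Q) := by noncomm_ring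
    _ = 1 := by rw [hP, hQ]; abel

variable [StarRing R]

theorem IsStarProjection.exists_of_sub_mul_self_add_self_eq_one (hP : IsStarProjection P)
    (hQ : IsStarProjection Q) (h : (P - Q) * (P - Q) + (P - Q) * (P - Q) = 1) :
    ∃ U : R, star U * U = P ∧ U * star U = 1 - P ∧ Q + Q = 1 + U + star U := by
  have hPP : P * P = P := hP.isIdempotentElem
  have hQQ : Q * Q = Q := hQ.isIdempotentElem
  have hanti : (P * Q + Q * P) + (P * Q + Q * P) = P + P + Q + Q - 1 := by
    rw [← h]
    calc _ = P + P + Q + Q - ((P - Q) * (P - Q) + (P - Q) * (P - Q))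
          + (P * P - P) + (P * P - P) + (Q * Q - Q) + (Q * Q - Q) := by noncomm_ring
      _ = _ := by rw [hPP, hQQ]; abel
  have hQPQ : Q * P * Q + Q * P * Q = Q := by
    have hQQ' : ∀ X, X * Q * Q = X * Q := fun X => by rw [mul_assoc, hQQ]
    have := congrArg (fun X => Q * X * Q) hanti
    simp only [mul_add, add_mul, mul_sub, sub_mul, mul_one, ← mul_assoc, hQQ, hQQ'] at this
    calc _ = (Q * P * Q + Q * P * Q + (Q * P * Q + Q * P * Q)) - (Q * P * Q + Q * P * Q) := by abel
      _ = Q := by rw [this]; abel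
  have hR : (Q + Q - 1) * (Q + Q - 1) = 1 := by
    calc _ = 1 + (Q * Q - Q) + (Q * Q - Q) + (Q * Q - Q) + (Q * Q - Q) := by noncomm_ring
      _ = 1 := by rw [hQQ]; abel
  have hstar : star ((Q + Q - 1) * P) = P * (Q + Q - 1) := by
    simp [star_mul, hP.isSelfAdjoint.star_eq, hQ.isSelfAdjoint.star_eq]
  refine ⟨(Q + Q - 1) * P, ?_, ?_, ?_⟩ <;> rw [hstar]
  · calc _ = P * ((Q + Q - 1) * (Q + Q - 1)) * P := by noncomm_ring
      _ = P := by rw [hR, mul_one, hPP]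
  · calc _ = (Q * P * Q + Q * P * Q) + (Q * P * Q + Q * P * Q)
          - ((P * Q + Q * P) + (P * Q + Q * P)) + P + (Q + Q - 1) * (P * P - P) * (Q + Q - 1) := by
          noncomm_ring
      _ = 1 - P := by rw [hQPQ, hanti, hPP, sub_self, mul_zero, zero_mul]; abel
  · calc Q + Q = 1 + ((P * Q + Q * P) + (P * Q + Q * P)) - (P + P) := by rw [hanti]; abel
      _ = _ := by noncomm_ring

theorem IsStarProjection.sub_mul_self_add_self_eq_one (hP : IsStarProjection P)
    (hQ : IsIdempotentElem Q) (hU₁ : star U * U = P) (hU₂ : U * star U = 1 - P) (hUP : U * P = U)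
    (hQU : Q + Q = 1 + U + star U) : (P - Q) * (P - Q) + (P - Q) * (P - Q) = 1 := by
  have hPP : P * P = P := hP.isIdempotentElem
  have hQQ : Q * Q = Q := hQ
  have hPU : P * U = 0 := by
    have := congrArg (· * U) hU₂
    simp only [mul_assoc, hU₁, hUP, sub_mul, one_mul] at this
    exact sub_eq_self.mp this.symm
  have hPU' : P * star U = star U := by
    simpa [star_mul, hP.isSelfAdjoint.star_eq] using congrArg star hUP
  have hUP' : star U * P = 0 := by
    simpa [star_mul, hP.isSelfAdjoint.star_eq] using congrArg star hPU
  calc _ = P + P + (Q + Q) - (P * (Q + Q) + (Q + Q) * P) + (P * P - P) + (P * P - P)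
        + (Q * Q - Q) + (Q * Q - Q) := by noncomm_ring
    _ = 1 := by
      rw [hQU, hPP, hQQ]
      simp only [mul_add, add_mul, mul_one, one_mul, hPU, hPU', hUP, hUP']
      abel

end

theorem eq_inv_two_smul_iff {K M : Type*} [DivisionRing K] [NeZero (2 : K)] [AddCommGroup M]
    [Module K M] {x y : M} : x = (2 : K)⁻¹ • y ↔ x + x = y := by
  rw [eq_inv_smul_iff₀ two_ne_zero, two_smul]

theorem Real.eq_of_sum_eq_of_sum_rpow_eq {ι : Type*} [Fintype ι] {q a : ℝ} (hq₀ : 0 < q)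
    (hq₁ : q ≠ 1) {x : ι → ℝ} (hx : ∀ i, 0 ≤ x i) (hsum : ∑ i, x i = Fintype.card ι * a)
    (hsum_rpow : ∑ i, x i ^ q = Fintype.card ι * a ^ q) (i : ι) : x i = a := by
  have hcard : (0 : ℝ) < Fintype.card ι := by
    have : Nonempty ι := ⟨i⟩
    exact_mod_cast Fintype.card_pos
  have hw : ∀ j ∈ (Finset.univ : Finset ι), (0 : ℝ) < (Fintype.card ι : ℝ)⁻¹ :=
    fun _ _ => inv_pos.2 hcard
  have hw₁ : ∑ _j : ι, (Fintype.card ι : ℝ)⁻¹ = 1 := by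
    simp [Finset.card_univ, hcard.ne']
  have hmean : ∑ j, (Fintype.card ι : ℝ)⁻¹ • x j = a := by
    rw [← Finset.smul_sum, hsum, smul_eq_mul, inv_mul_cancel_left₀ hcard.ne']
  have hjensen : (∑ j, (Fintype.card ι : ℝ)⁻¹ • x j) ^ q
      = ∑ j, (Fintype.card ι : ℝ)⁻¹ • x j ^ q := by
    rw [hmean, ← Finset.smul_sum, hsum_rpow, smul_eq_mul, inv_mul_cancel_left₀ hcard.ne']
  have hmem : ∀ j ∈ (Finset.univ : Finset ι), x j ∈ Set.Ici 0 := fun j _ => hx j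
  rw [← hmean]
  rcases hq₁.lt_or_gt with hq | hq
  · exact ((strictConcaveOn_rpow hq₀ hq).map_sum_eq_iff hw hw₁ hmem).1 hjensen i (Finset.mem_univ i)
  · exact ((strictConvexOn_rpow hq).map_sum_eq_iff hw hw₁ hmem).1 hjensen i (Finset.mem_univ i)

namespace Matrix.IsHermitian

variable {𝕜 m : Type*} [RCLike 𝕜] [Fintype m] [DecidableEq m] {A : Matrix m m 𝕜}

theorem eigenvalues_eq_of_eq_smul_one [Nonempty m] (hA : A.IsHermitian) {c : ℝ}
    (h : A = (c : 𝕜) • 1) (i : m) : hA.eigenvalues i = c := by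
  have hspec : spectrum ℝ A = {c} := by
    rw [h, ← RCLike.real_smul_eq_coe_smul, ← Algebra.algebraMap_eq_smul_one, spectrum.scalar_eq]
  simpa [hspec] using hA.eigenvalues_mem_spectrum_real i

theorem eq_smul_one_of_eigenvalues_eq (hA : A.IsHermitian) {c : ℝ}
    (h : ∀ i, hA.eigenvalues i = c) : A = (c : 𝕜) • 1 := by
  rw [hA.spectral_theorem]
  have : RCLike.ofReal ∘ hA.eigenvalues = fun _ => (c : 𝕜) := funext fun i => by simp [h i]
  rw [this, ← smul_one_eq_diagonal, map_smul, map_one]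

end Matrix.IsHermitian

section lpnorm

variable {m : Type*} [Fintype m] [DecidableEq m] [Nonempty m] {p : ℝ}

theorem lpnorm_eq_sqrt_iff {t : ℝ} (hp : p ≠ 0) (ht : 0 ≤ t) (A : Matrix m m ℂ) :
    lpnorm p A = √t ↔ ∑ i, (posSemidef_conjTranspose_mul_self A).isHermitian.eigenvalues i ^ (p / 2)
      = Fintype.card m * t ^ (p / 2) := by
  have hcard : (0 : ℝ) < Fintype.card m := by exact_mod_cast Fintype.card_pos
  have hsum : 0 ≤ ∑ i, (posSemidef_conjTranspose_mul_self A).isHermitian.eigenvalues i ^ (p / 2) :=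
    Finset.sum_nonneg fun i _ =>
      Real.rpow_nonneg ((posSemidef_conjTranspose_mul_self A).eigenvalues_nonneg i) _
  rw [lpnorm, one_div, Real.rpow_inv_eq (div_nonneg hsum hcard.le) (Real.sqrt_nonneg t) hp,
    Real.sqrt_eq_rpow, ← Real.rpow_mul ht, div_eq_iff hcard.ne', mul_comm _ (Fintype.card m : ℝ)]
  ring_nf

theorem lpnorm_eq_sqrt_of_conjTranspose_mul_self_eq {t : ℝ} (hp : p ≠ 0) (ht : 0 ≤ t)
    {A : Matrix m m ℂ} (h : Aᴴ * A = (t : ℂ) • 1) : lpnorm p A = √t := by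
  rw [lpnorm_eq_sqrt_iff hp ht]
  simp [(posSemidef_conjTranspose_mul_self A).isHermitian.eigenvalues_eq_of_eq_smul_one h,
    Finset.card_univ]

theorem conjTranspose_mul_self_eq_of_lpnorm_eq (hp : 0 < p) (hp₂ : p ≠ 2) {A B : Matrix m m ℂ}
    (hAB : Aᴴ * A + Bᴴ * B = 1) (hA : lpnorm p A = 1 / √2) (hB : lpnorm p B = 1 / √2) :
    Aᴴ * A = (2 : ℂ)⁻¹ • 1 := by
  have hsqrt : (1 : ℝ) / √2 = √(2⁻¹) := by rw [Real.sqrt_inv, one_div]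
  rw [hsqrt, lpnorm_eq_sqrt_iff hp.ne' (by norm_num)] at hA hB
  have htrace := congrArg trace hAB
  rw [trace_add, (posSemidef_conjTranspose_mul_self A).isHermitian.trace_eq_sum_eigenvalues,
    (posSemidef_conjTranspose_mul_self B).isHermitian.trace_eq_sum_eigenvalues,
    trace_one] at htrace
  set a := (posSemidef_conjTranspose_mul_self A).isHermitian.eigenvalues
  set b := (posSemidef_conjTranspose_mul_self B).isHermitian.eigenvalues
  replace htrace : ∑ i, a i + ∑ i, b i = Fintype.card m :=
    Complex.ofReal_injective (by push_cast; exact htrace)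
  have ha_half (i : m) : a i = 2⁻¹ :=
    Real.eq_of_sum_eq_of_sum_rpow_eq (q := p / 2) (x := Sum.elim a b) (by positivity)
      (fun h => hp₂ (by linarith))
      (Sum.rec (posSemidef_conjTranspose_mul_self A).eigenvalues_nonneg
        (posSemidef_conjTranspose_mul_self B).eigenvalues_nonneg)
      (by simp only [Fintype.sum_sum_type, Sum.elim_inl, Sum.elim_inr, htrace, Fintype.card_sum]
          push_cast; ring)
      (by simp only [Fintype.sum_sum_type, Sum.elim_inl, Sum.elim_inr, hA, hB, Fintype.card_sum]
          push_cast; ring)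
      (Sum.inl i)
  simpa using
    (posSemidef_conjTranspose_mul_self A).isHermitian.eq_smul_one_of_eigenvalues_eq ha_half

end lpnorm

namespace Matrix

variable {n R : Type*} [Fintype n] [DecidableEq n] [Ring R] [PartialOrder R] [StarRing R]
  [StarOrderedRing R] [NoZeroDivisors R] {P Q U : Matrix n n R}

theorem mul_eq_self_of_conjTranspose_mul_self_eq (hP : IsIdempotentElem P) (hU : Uᴴ * U = P) :
    U * P = U := by
  have hPP : P * P = P := hP
  have hzero : (U - U * P)ᴴ * (U - U * P) = 0 := by
    simp only [conjTranspose_sub, conjTranspose_mul, ← hU, conjTranspose_conjTranspose]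
    calc _ = Uᴴ * U - (Uᴴ * U) * (Uᴴ * U) - (Uᴴ * U) * (Uᴴ * U)
          + (Uᴴ * U) * (Uᴴ * U) * (Uᴴ * U) := by noncomm_ring
      _ = 0 := by simp only [hU, hPP]; abel
  exact (sub_eq_zero.mp (conjTranspose_mul_self_eq_zero.mp hzero)).symm

theorem sub_mul_self_add_self_eq_one_of_conjTranspose_mul_self_eq (hP : IsStarProjection P)
    (hQ : IsIdempotentElem Q) (hU₁ : Uᴴ * U = P) (hU₂ : U * Uᴴ = 1 - P)
    (hQU : Q + Q = 1 + U + Uᴴ) :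
    (P - Q) * (P - Q) + (P - Q) * (P - Q) = 1 ∧
      (1 - P - Q) * (1 - P - Q) + (1 - P - Q) * (1 - P - Q) = 1 := by
  have hUP : U * P = U := mul_eq_self_of_conjTranspose_mul_self_eq hP.isIdempotentElem hU₁
  have hUP' : Uᴴ * (1 - P) = Uᴴ := mul_eq_self_of_conjTranspose_mul_self_eq
    hP.one_sub.isIdempotentElem (by rw [conjTranspose_conjTranspose, hU₂])
  refine ⟨hP.sub_mul_self_add_self_eq_one hQ hU₁ hU₂ hUP hQU,
    hP.one_sub.sub_mul_self_add_self_eq_one hQ (U := Uᴴ) ?_ ?_ hUP' ?_⟩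
  · rwa [star_eq_conjTranspose, conjTranspose_conjTranspose]
  · rwa [star_eq_conjTranspose, conjTranspose_conjTranspose, sub_sub_cancel]
  · rw [star_eq_conjTranspose, conjTranspose_conjTranspose, hQU, add_right_comm]

end Matrix

theorem stmt14_general (n : ℕ) (hn : 1 ≤ n) (p : ℝ) (hp : 0 < p) (hp2 : p ≠ 2)
    (P Q : Matrix (Fin (2 * n)) (Fin (2 * n)) ℂ)
    (hP : Pᴴ = P) (hP2 : P * P = P)
    (hQ : Qᴴ = Q) (hQ2 : Q * Q = Q) :
    (lpnorm p (P - Q) = 1 / Real.sqrt 2 ∧ lpnorm p ((1 - P) - Q) = 1 / Real.sqrt 2) ↔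
      ∃ U : Matrix (Fin (2 * n)) (Fin (2 * n)) ℂ,
        Uᴴ * U = P ∧ U * Uᴴ = 1 - P ∧ Q = (2 : ℂ)⁻¹ • (1 + U + Uᴴ) := by
  have : Nonempty (Fin (2 * n)) := ⟨⟨0, by omega⟩⟩
  have hP' : IsStarProjection P := ⟨hP2, hP⟩
  have hQ' : IsStarProjection Q := ⟨hQ2, hQ⟩
  have hA : (P - Q)ᴴ = P - Q := hP'.isSelfAdjoint.sub hQ'.isSelfAdjoint
  have hB : (1 - P - Q)ᴴ = 1 - P - Q := hP'.one_sub.isSelfAdjoint.sub hQ'.isSelfAdjoint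
  constructor
  · rintro ⟨hnormA, hnormB⟩
    have hsq := conjTranspose_mul_self_eq_of_lpnorm_eq hp hp2
      (by rw [hA, hB]; exact hP'.isIdempotentElem.sub_mul_self_add_one_sub_sub_mul_self hQ2)
      hnormA hnormB
    rw [hA, eq_inv_two_smul_iff] at hsq
    obtain ⟨U, hU₁, hU₂, hQU⟩ := hP'.exists_of_sub_mul_self_add_self_eq_one hQ' hsq
    exact ⟨U, hU₁, hU₂, eq_inv_two_smul_iff.2 hQU⟩
  · rintro ⟨U, hU₁, hU₂, hQU⟩
    obtain ⟨hsqA, hsqB⟩ := sub_mul_self_add_self_eq_one_of_conjTranspose_mul_self_eq hP' hQ2 hU₁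
      hU₂ (eq_inv_two_smul_iff.1 hQU)
    rw [one_div, ← Real.sqrt_inv]
    refine ⟨lpnorm_eq_sqrt_of_conjTranspose_mul_self_eq hp.ne' (by norm_num) ?_,
      lpnorm_eq_sqrt_of_conjTranspose_mul_self_eq hp.ne' (by norm_num) ?_⟩
    · rwa [hA, Complex.ofReal_inv, Complex.ofReal_ofNat, eq_inv_two_smul_iff]
    · rwa [hB, Complex.ofReal_inv, Complex.ofReal_ofNat, eq_inv_two_smul_iff]

/-- For `p ≠ 2` and trace-`1/2` projections `P, Q ∈ M_{2n}(ℂ)`: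
`‖P − Q‖_p = ‖(I − P) − Q‖_p = 1/√2` iff there is a partial isometry `U` with
`UᴴU = P`, `UUᴴ = I − P` and `Q = (I + U + Uᴴ)/2`. -/
theorem stmt14 (n : ℕ) (hn : 1 ≤ n) (p : ℝ) (hp : 0 < p) (hp2 : p ≠ 2)
    (P Q : Matrix (Fin (2 * n)) (Fin (2 * n)) ℂ)
    (hP : Pᴴ = P) (hP2 : P * P = P) (hPtr : P.trace = (n : ℂ))
    (hQ : Qᴴ = Q) (hQ2 : Q * Q = Q) (hQtr : Q.trace = (n : ℂ)) :
    (lpnorm p (P - Q) = 1 / Real.sqrt 2 ∧ lpnorm p ((1 - P) - Q) = 1 / Real.sqrt 2) ↔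
      ∃ U : Matrix (Fin (2 * n)) (Fin (2 * n)) ℂ,
        Uᴴ * U = P ∧ U * Uᴴ = 1 - P ∧ Q = (2 : ℂ)⁻¹ • (1 + U + Uᴴ) :=
  stmt14_general n hn p hp hp2 P Q hP hP2 hQ hQ2
end

section
/- Let f : ℝ → ℝ be defined by f(x) = (1 − 2x)/(1 − x). Then: (i) for every x ∈ (1/3, 1/2), x − f(f(x)) = x + 1/x − 3, which is positive for x ∈ (1/3, (3 − √5)/2) and negative for x ∈ ((3 − √5)/2, 1/2); (ii) the only fixed point of f in the interval (1/3, 1/2) is (3 − √5)/2; (iii) for every c ∈ (1/3, 1/2) with c ≠ (3 − √5)/2, there exists n ∈ ℕ such that the n-fold iterate f^[n](c) does not lie in (1/3, 1/2). -/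
/-!
Away from `0` and `1`, `f ∘ f` is the Möbius map `x ↦ 3 - 1/x`, which moves `x` by
`-(x + 1/x - 3) = -(x² - 3x + 1)/x`. The only zero of this displacement below `(3 + √5)/2` is
`α = (3 - √5)/2`, which is also the only fixed point of `f` there. Since `x + 1/x` is antitone on
`(0, 1]`, an orbit of `f ∘ f` starting at `c ≠ α` is pushed away from `α` by at least
`|c + 1/c - 3|` at every step while it stays in `(1/3, 1/2)`, so it cannot stay there forever.
-/

open Function

theorem exists_iterate_notMem_of_le_sub {g : ℝ → ℝ} {s : Set ℝ} {c δ : ℝ} (hs : BddBelow s)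
    (hδ : 0 < δ) (hg : ∀ x ∈ s, x ≤ c → g x ≤ x - δ) : ∃ n, g^[n] c ∉ s := by
  by_contra! hmem
  obtain ⟨b, hb⟩ := hs
  have hdrift : ∀ n : ℕ, g^[n] c ≤ c - n * δ := by
    intro n
    induction n with
    | zero => simp
    | succ n ih =>
      have hstep := hg _ (hmem n) (by nlinarith [n.cast_nonneg (α := ℝ)])
      rw [iterate_succ_apply', Nat.cast_succ]
      linarith
  obtain ⟨n, hn⟩ := exists_nat_gt ((c - b) / δ)
  rw [div_lt_iff₀ hδ] at hn
  linarith [hb (hmem n), hdrift n]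

theorem exists_iterate_notMem_of_add_le {g : ℝ → ℝ} {s : Set ℝ} {c δ : ℝ} (hs : BddAbove s)
    (hδ : 0 < δ) (hg : ∀ x ∈ s, c ≤ x → x + δ ≤ g x) : ∃ n, g^[n] c ∉ s := by
  have hconj : Semiconj Neg.neg g (fun y => -g (-y)) := fun x => by simp
  obtain ⟨n, hn⟩ := exists_iterate_notMem_of_le_sub (g := fun y => -g (-y)) (s := -s) (c := -c)
    (bddBelow_neg.mpr hs) hδ fun x hx hxc => by linarith [hg (-x) hx (by linarith)]
  refine ⟨n, fun h => hn ?_⟩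
  rw [← (hconj.iterate_right n).eq]
  simpa using h

theorem sq_sub_three_mul_add_one_eq_mul (x : ℝ) :
    x ^ 2 - 3 * x + 1 = (x - (3 - √5) / 2) * (x - (3 + √5) / 2) := by
  linear_combination (1 / 4 : ℝ) * Real.sq_sqrt (show (0 : ℝ) ≤ 5 by norm_num)

theorem two_lt_sqrt_five : 2 < √5 := by
  nlinarith [Real.sq_sqrt (show (0 : ℝ) ≤ 5 by norm_num), Real.sqrt_nonneg 5]

theorem sqrt_five_lt_seven_div_three : √5 < 7 / 3 := by
  nlinarith [Real.sq_sqrt (show (0 : ℝ) ≤ 5 by norm_num), Real.sqrt_nonneg 5]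

theorem three_sub_sqrt_five_div_two_mem_Ioo : (3 - √5) / 2 ∈ Set.Ioo (1 / 3 : ℝ) (1 / 2) := by
  constructor <;> linarith [two_lt_sqrt_five, sqrt_five_lt_seven_div_three]

theorem add_one_div_sub_three_eq {x : ℝ} (hx : x ≠ 0) :
    x + 1 / x - 3 = (x - (3 - √5) / 2) * (x - (3 + √5) / 2) / x := by
  rw [← sq_sub_three_mul_add_one_eq_mul]
  field_simp
  ring

theorem add_one_div_sub_three_pos {x : ℝ} (hx : 0 < x) (hxα : x < (3 - √5) / 2) :
    0 < x + 1 / x - 3 := by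
  rw [add_one_div_sub_three_eq hx.ne']
  have : 0 < √5 := by positivity
  exact div_pos (mul_pos_of_neg_of_neg (by linarith) (by linarith)) hx

theorem add_one_div_sub_three_neg {x : ℝ} (hαx : (3 - √5) / 2 < x) (hxβ : x < (3 + √5) / 2) :
    x + 1 / x - 3 < 0 := by
  have hx : 0 < x := lt_trans (by linarith [sqrt_five_lt_seven_div_three]) hαx
  rw [add_one_div_sub_three_eq hx.ne']
  exact div_neg_of_neg_of_pos (mul_neg_of_pos_of_neg (by linarith) (by linarith)) hx

theorem antitoneOn_add_one_div : AntitoneOn (fun x : ℝ => x + 1 / x) (Set.Ioc 0 1) := by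
  rintro x ⟨hx0, hx1⟩ y ⟨hy0, hy1⟩ hxy
  have hdiff : (x + 1 / x) - (y + 1 / y) = (y - x) * (1 - x * y) / (x * y) := by
    field_simp
    ring
  have : 0 ≤ (y - x) * (1 - x * y) / (x * y) :=
    div_nonneg (mul_nonneg (by linarith) (by nlinarith)) (by positivity)
  simp only
  linarith

section

variable {f : ℝ → ℝ}

theorem isFixedPt_iff_of_eq_div (hf : ∀ x : ℝ, f x = (1 - 2 * x) / (1 - x)) {x : ℝ} (hx1 : x ≠ 1)
    (hxβ : x < (3 + √5) / 2) : IsFixedPt f x ↔ x = (3 - √5) / 2 := by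
  rw [IsFixedPt, hf, div_eq_iff (sub_ne_zero.mpr hx1.symm)]
  have hβ : x - (3 + √5) / 2 ≠ 0 := by linarith
  have hquad := sq_sub_three_mul_add_one_eq_mul x
  constructor
  · intro h
    have : (x - (3 - √5) / 2) * (x - (3 + √5) / 2) = 0 := by linear_combination h - hquad
    linarith [(mul_eq_zero.mp this).resolve_right hβ]
  · intro h
    have : x ^ 2 - 3 * x + 1 = 0 := by rw [hquad, h]; ring
    linear_combination this

theorem comp_self_eq_of_eq_div (hf : ∀ x : ℝ, f x = (1 - 2 * x) / (1 - x)) {x : ℝ} (hx0 : x ≠ 0)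
    (hx1 : x ≠ 1) : f (f x) = x - (x + 1 / x - 3) := by
  have h1 : (1 : ℝ) - x ≠ 0 := sub_ne_zero.mpr hx1.symm
  have hfx : 1 - f x = x / (1 - x) := by
    rw [hf x]
    field_simp
    ring
  rw [hf (f x), div_eq_iff (by rw [hfx]; exact div_ne_zero hx0 h1), hfx, hf x]
  field_simp
  ring

theorem exists_iterate_notMem_Ioo_of_eq_div (hf : ∀ x : ℝ, f x = (1 - 2 * x) / (1 - x)) {c : ℝ}
    (hc : c ∈ Set.Ioo (1 / 3 : ℝ) (1 / 2)) (hcα : c ≠ (3 - √5) / 2) :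
    ∃ n, f^[n] c ∉ Set.Ioo (1 / 3 : ℝ) (1 / 2) := by
  have hc0 : 0 < c := by linarith [hc.1]
  have hff : ∀ x ∈ Set.Ioo (1 / 3 : ℝ) (1 / 2), f^[2] x = x - (x + 1 / x - 3) := fun x hx =>
    comp_self_eq_of_eq_div hf (by linarith [hx.1]) (by linarith [hx.2])
  have hIoc : ∀ x ∈ Set.Ioo (1 / 3 : ℝ) (1 / 2), x ∈ Set.Ioc (0 : ℝ) 1 := fun x hx =>
    ⟨by linarith [hx.1], by linarith [hx.2]⟩
  suffices ∃ n, (f^[2])^[n] c ∉ Set.Ioo (1 / 3 : ℝ) (1 / 2) by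
    obtain ⟨n, hn⟩ := this
    exact ⟨2 * n, by rwa [iterate_mul]⟩
  rcases hcα.lt_or_gt with hlt | hgt
  · refine exists_iterate_notMem_of_le_sub bddBelow_Ioo (add_one_div_sub_three_pos hc0 hlt)
      fun x hx hxc => ?_
    have := antitoneOn_add_one_div (hIoc x hx) (hIoc c hc) hxc
    rw [hff x hx]
    simp only at this
    linarith
  · have hβ : c < (3 + √5) / 2 := by linarith [hc.2, two_lt_sqrt_five]
    refine exists_iterate_notMem_of_add_le bddAbove_Ioo
      (neg_pos.mpr (add_one_div_sub_three_neg hgt hβ)) fun x hx hcx => ?_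
    have := antitoneOn_add_one_div (hIoc c hc) (hIoc x hx) hcx
    rw [hff x hx]
    simp only at this
    linarith

end

/-- Properties of `f(x) = (1 − 2x)/(1 − x)` on `(1/3, 1/2)`:
(i) `x − f(f(x)) = x + 1/x − 3`, which is positive on `(1/3, (3 − √5)/2)` and negative
on `((3 − √5)/2, 1/2)`; (ii) the only fixed point of `f` in `(1/3, 1/2)` is
`(3 − √5)/2`; (iii) if `c ∈ (1/3, 1/2)` and `c ≠ (3 − √5)/2` then some iterate
`f^[n](c)` leaves `(1/3, 1/2)`. -/
theorem stmt18 (f : ℝ → ℝ) (hf : ∀ x : ℝ, f x = (1 - 2 * x) / (1 - x)) :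
    (∀ x ∈ Set.Ioo (1 / 3 : ℝ) (1 / 2), x - f (f x) = x + 1 / x - 3) ∧
    (∀ x ∈ Set.Ioo (1 / 3 : ℝ) ((3 - Real.sqrt 5) / 2), 0 < x - f (f x)) ∧
    (∀ x ∈ Set.Ioo ((3 - Real.sqrt 5) / 2) (1 / 2 : ℝ), x - f (f x) < 0) ∧
    (∀ x ∈ Set.Ioo (1 / 3 : ℝ) (1 / 2), (f x = x ↔ x = (3 - Real.sqrt 5) / 2)) ∧
    (∀ c ∈ Set.Ioo (1 / 3 : ℝ) (1 / 2), c ≠ (3 - Real.sqrt 5) / 2 →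
      ∃ n : ℕ, f^[n] c ∉ Set.Ioo (1 / 3 : ℝ) (1 / 2)) := by
  obtain ⟨hα₁, hα₂⟩ := three_sub_sqrt_five_div_two_mem_Ioo
  have hdisp : ∀ x ∈ Set.Ioo (1 / 3 : ℝ) (1 / 2), x - f (f x) = x + 1 / x - 3 := fun x hx => by
    rw [comp_self_eq_of_eq_div hf (by linarith [hx.1]) (by linarith [hx.2])]
    ring
  refine ⟨hdisp, fun x hx => ?_, fun x hx => ?_, fun x hx => ?_,
    fun c hc hcα => exists_iterate_notMem_Ioo_of_eq_div hf hc hcα⟩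
  · rw [hdisp x ⟨hx.1, hx.2.trans hα₂⟩]
    exact add_one_div_sub_three_pos (by linarith [hx.1]) hx.2
  · rw [hdisp x ⟨hα₁.trans hx.1, hx.2⟩]
    exact add_one_div_sub_three_neg hx.1 (by linarith [hx.2, two_lt_sqrt_five])
  · exact isFixedPt_iff_of_eq_div hf (by linarith [hx.2]) (by linarith [hx.2, two_lt_sqrt_five])
end

section
/- Let n ≥ 1, let H ∈ Mₙ(ℂ) be positive semidefinite with H ≤ I (i.e., I − H is also positive semidefinite), and let W₀ ∈ Mₙ(ℂ) be unitary. Let K be the positive semidefinite square root of H(I − H), set W := (1/√2)·fromBlocks(I, i·W₀, −i·I, −W₀) ∈ M_{2n}(ℂ) and V₀ := −2K − i·(I − 2H) ∈ Mₙ(ℂ). Then: (i) W is unitary; (ii) V₀ is unitary; (iii) fromBlocks(H, K·W₀, W₀ᴴ·K, W₀ᴴ·(I − H)·W₀) = (1/2)·Wᴴ·fromBlocks(I, V₀, V₀ᴴ, I)·W. -/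
open Matrix
open scoped ComplexOrder

theorem sub_I_smul_mem_unitary {A : Type*} [Ring A] [StarRing A] [Algebra ℂ A] [StarModule ℂ A]
    {X Y : A} (hX : IsSelfAdjoint X) (hY : IsSelfAdjoint Y) (hXY : Commute X Y)
    (h : X * X + Y * Y = 1) : X - Complex.I • Y ∈ unitary A := by
  have hstar : star (X - Complex.I • Y) = X + Complex.I • Y := by
    simp [star_smul, hX.star_eq, hY.star_eq, sub_eq_add_neg]
  rw [Unitary.mem_iff, hstar, ← h]
  constructor
  · simp only [add_mul, mul_sub, smul_mul_assoc, mul_smul_comm, hXY.eq]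
    match_scalars <;> simp
  · simp only [sub_mul, mul_add, smul_mul_assoc, mul_smul_comm, hXY.eq]
    match_scalars <;> simp

theorem star_inv_sqrt_two_mul_self :
    star ((Real.sqrt 2 : ℂ))⁻¹ * ((Real.sqrt 2 : ℂ))⁻¹ = 2⁻¹ := by
  rw [Complex.star_def, map_inv₀, Complex.conj_ofReal, ← mul_inv, ← Complex.ofReal_mul,
    Real.mul_self_sqrt zero_le_two, Complex.ofReal_ofNat]

namespace Matrix

variable {m : Type*} [Fintype m] [DecidableEq m]

open scoped MatrixOrder in
theorem PosSemidef.commute_of_commute_mul_self {𝕜 : Type*} [RCLike 𝕜] {K X : Matrix m m 𝕜}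
    (hK : K.PosSemidef) (h : Commute X (K * K)) : Commute X K := by
  rw [← CFC.sqrt_mul_self K hK.nonneg]
  exact (h.symm.cfcₙ_nnreal _).symm

theorem conjTranspose_mul_fromBlocks_mul_fromBlocks (U V : Matrix m m ℂ) :
    (fromBlocks 1 (Complex.I • U) (-(Complex.I • 1)) (-U))ᴴ * fromBlocks 1 V Vᴴ 1 *
        fromBlocks 1 (Complex.I • U) (-(Complex.I • 1)) (-U) =
      fromBlocks ((2 : ℂ) • 1 + Complex.I • (Vᴴ - V)) (-((V + Vᴴ) * U)) (-(Uᴴ * (V + Vᴴ)))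
        (Uᴴ * ((2 : ℂ) • 1 + Complex.I • (V - Vᴴ)) * U) := by
  rw [fromBlocks_conjTranspose, fromBlocks_multiply, fromBlocks_multiply, fromBlocks_inj]
  refine ⟨?_, ?_, ?_, ?_⟩ <;>
  · simp only [conjTranspose_one, conjTranspose_neg, conjTranspose_smul, Complex.star_def,
      Complex.conj_I, Matrix.one_mul, Matrix.mul_one, Matrix.neg_mul, Matrix.mul_neg,
      smul_mul_assoc, mul_smul_comm, Matrix.add_mul, Matrix.mul_add, Matrix.sub_mul,
      Matrix.mul_sub, Matrix.mul_assoc]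
    match_scalars <;> simp <;> ring

theorem inv_sqrt_two_smul_fromBlocks_mem_unitaryGroup {U : Matrix m m ℂ}
    (hU : U ∈ unitaryGroup m ℂ) :
    ((Real.sqrt 2 : ℂ))⁻¹ • fromBlocks 1 (Complex.I • U) (-(Complex.I • 1)) (-U) ∈
      unitaryGroup (m ⊕ m) ℂ := by
  have hUU : Uᴴ * U = 1 := mem_unitaryGroup_iff'.mp hU
  have h := conjTranspose_mul_fromBlocks_mul_fromBlocks U 0
  rw [conjTranspose_zero, fromBlocks_one, Matrix.mul_one] at h
  rw [mem_unitaryGroup_iff', star_eq_conjTranspose, conjTranspose_smul, smul_mul_smul_comm,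
    star_inv_sqrt_two_mul_self, h, ← fromBlocks_one, fromBlocks_smul]
  simp [hUU]

theorem neg_two_smul_sub_I_smul_mem_unitaryGroup {H K : Matrix m m ℂ} (hH : H.IsHermitian)
    (hK : K.IsHermitian) (hHK : Commute H K) (hKsq : K * K = H * (1 - H)) :
    -((2 : ℂ) • K) - Complex.I • (1 - (2 : ℂ) • H) ∈ unitaryGroup m ℂ := by
  have hX : IsSelfAdjoint (-((2 : ℂ) • K)) :=
    ((IsSelfAdjoint.ofNat 2).smul hK.isSelfAdjoint).neg
  have hY : IsSelfAdjoint (1 - (2 : ℂ) • H) :=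
    (IsSelfAdjoint.one _).sub ((IsSelfAdjoint.ofNat 2).smul hH.isSelfAdjoint)
  have hXY : Commute (-((2 : ℂ) • K)) (1 - (2 : ℂ) • H) :=
    ((Commute.one_right K).sub_right (hHK.symm.smul_right 2)).smul_left 2 |>.neg_left
  have hsq : -((2 : ℂ) • K) * -((2 : ℂ) • K) + (1 - (2 : ℂ) • H) * (1 - (2 : ℂ) • H) = 1 := by
    simp only [neg_mul_neg, hKsq, Matrix.mul_sub, Matrix.sub_mul, Matrix.mul_one,
      Matrix.one_mul, smul_mul_assoc, mul_smul_comm]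
    module
  exact sub_I_smul_mem_unitary hX hY hXY hsq

theorem fromBlocks_eq_conjTranspose_mul_fromBlocks_mul {H K U : Matrix m m ℂ}
    (hH : H.IsHermitian) (hK : K.IsHermitian) (hU : U ∈ unitaryGroup m ℂ) :
    fromBlocks H (K * U) (Uᴴ * K) (Uᴴ * (1 - H) * U) =
      (4 : ℂ)⁻¹ • ((fromBlocks 1 (Complex.I • U) (-(Complex.I • 1)) (-U))ᴴ *
        fromBlocks 1 (-((2 : ℂ) • K) - Complex.I • (1 - (2 : ℂ) • H))
          (-((2 : ℂ) • K) - Complex.I • (1 - (2 : ℂ) • H))ᴴ 1 *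
        fromBlocks 1 (Complex.I • U) (-(Complex.I • 1)) (-U)) := by
  set V := -((2 : ℂ) • K) - Complex.I • (1 - (2 : ℂ) • H)
  have hVstar : Vᴴ = -((2 : ℂ) • K) + Complex.I • (1 - (2 : ℂ) • H) := by
    simp only [V, conjTranspose_sub, conjTranspose_neg, conjTranspose_smul, conjTranspose_one,
      hH.eq, hK.eq, Complex.star_def, Complex.conj_I, map_ofNat]
    module
  have hre : V + Vᴴ = -((4 : ℂ) • K) := by rw [hVstar]; module
  have him : Complex.I • (Vᴴ - V) = (-2 : ℂ) • (1 - (2 : ℂ) • H) := by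
    rw [hVstar]
    match_scalars
    · ring
    · linear_combination 2 * Complex.I_sq
    · linear_combination -4 * Complex.I_sq
  have hUU : Uᴴ * U = 1 := mem_unitaryGroup_iff'.mp hU
  rw [conjTranspose_mul_fromBlocks_mul_fromBlocks, hre, ← neg_sub Vᴴ, smul_neg, him,
    fromBlocks_smul, fromBlocks_inj]
  refine ⟨by module, ?_, ?_, ?_⟩ <;>
  · simp only [Matrix.mul_sub, Matrix.sub_mul, Matrix.mul_add, Matrix.add_mul, Matrix.neg_mul,
      Matrix.mul_neg, smul_mul_assoc, mul_smul_comm, Matrix.mul_one, Matrix.mul_assoc, hUU]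
    module

end Matrix

theorem stmt19_general (n : ℕ) (H K W₀ : Matrix (Fin n) (Fin n) ℂ)
    (hH : H.PosSemidef)
    (hW₀ : W₀ ∈ Matrix.unitaryGroup (Fin n) ℂ)
    (hK : K.PosSemidef) (hKsq : K * K = H * (1 - H)) :
    ((Real.sqrt 2 : ℂ))⁻¹ •
        Matrix.fromBlocks 1 (Complex.I • W₀) (-(Complex.I • (1 : Matrix (Fin n) (Fin n) ℂ)))
          (-W₀) ∈ Matrix.unitaryGroup (Fin n ⊕ Fin n) ℂ ∧
    -((2 : ℂ) • K) - Complex.I • (1 - (2 : ℂ) • H) ∈ Matrix.unitaryGroup (Fin n) ℂ ∧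
    Matrix.fromBlocks H (K * W₀) (W₀ᴴ * K) (W₀ᴴ * (1 - H) * W₀) =
      (2 : ℂ)⁻¹ •
        ((((Real.sqrt 2 : ℂ))⁻¹ •
            Matrix.fromBlocks 1 (Complex.I • W₀)
              (-(Complex.I • (1 : Matrix (Fin n) (Fin n) ℂ))) (-W₀))ᴴ *
          Matrix.fromBlocks 1 (-((2 : ℂ) • K) - Complex.I • (1 - (2 : ℂ) • H))
            (-((2 : ℂ) • K) - Complex.I • (1 - (2 : ℂ) • H))ᴴ 1 *
          (((Real.sqrt 2 : ℂ))⁻¹ •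
            Matrix.fromBlocks 1 (Complex.I • W₀)
              (-(Complex.I • (1 : Matrix (Fin n) (Fin n) ℂ))) (-W₀))) := by
  have hHK : Commute H K := hK.commute_of_commute_mul_self <| by
    rw [hKsq]
    exact (Commute.refl H).mul_right ((Commute.one_right H).sub_right (Commute.refl H))
  refine ⟨inv_sqrt_two_smul_fromBlocks_mem_unitaryGroup hW₀,
    neg_two_smul_sub_I_smul_mem_unitaryGroup hH.1 hK.1 hHK hKsq, ?_⟩
  rw [fromBlocks_eq_conjTranspose_mul_fromBlocks_mul hH.1 hK.1 hW₀, conjTranspose_smul,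
    smul_mul_assoc, smul_mul_assoc, mul_smul_comm, smul_smul (star _),
    star_inv_sqrt_two_mul_self, smul_smul]
  norm_num

/-- Let `0 ≤ H ≤ I` in `Mₙ(ℂ)`, `W₀` unitary, `K` the positive semidefinite square
root of `H(I − H)`, `W := (1/√2)·fromBlocks I (iW₀) (−iI) (−W₀)` and
`V₀ := −2K − i(I − 2H)`. Then `W` and `V₀` are unitary, and
`fromBlocks H (KW₀) (W₀ᴴK) (W₀ᴴ(I − H)W₀) = (1/2)·Wᴴ·fromBlocks I V₀ V₀ᴴ I·W`. -/
theorem stmt19 (n : ℕ) (hn : 1 ≤ n) (H K W₀ : Matrix (Fin n) (Fin n) ℂ)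
    (hH : H.PosSemidef) (hH1 : (1 - H).PosSemidef)
    (hW₀ : W₀ ∈ Matrix.unitaryGroup (Fin n) ℂ)
    (hK : K.PosSemidef) (hKsq : K * K = H * (1 - H)) :
    ((Real.sqrt 2 : ℂ))⁻¹ •
        Matrix.fromBlocks 1 (Complex.I • W₀) (-(Complex.I • (1 : Matrix (Fin n) (Fin n) ℂ)))
          (-W₀) ∈ Matrix.unitaryGroup (Fin n ⊕ Fin n) ℂ ∧
    -((2 : ℂ) • K) - Complex.I • (1 - (2 : ℂ) • H) ∈ Matrix.unitaryGroup (Fin n) ℂ ∧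
    Matrix.fromBlocks H (K * W₀) (W₀ᴴ * K) (W₀ᴴ * (1 - H) * W₀) =
      (2 : ℂ)⁻¹ •
        ((((Real.sqrt 2 : ℂ))⁻¹ •
            Matrix.fromBlocks 1 (Complex.I • W₀)
              (-(Complex.I • (1 : Matrix (Fin n) (Fin n) ℂ))) (-W₀))ᴴ *
          Matrix.fromBlocks 1 (-((2 : ℂ) • K) - Complex.I • (1 - (2 : ℂ) • H))
            (-((2 : ℂ) • K) - Complex.I • (1 - (2 : ℂ) • H))ᴴ 1 *
          (((Real.sqrt 2 : ℂ))⁻¹ •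
            Matrix.fromBlocks 1 (Complex.I • W₀)
              (-(Complex.I • (1 : Matrix (Fin n) (Fin n) ℂ))) (-W₀))) :=
  stmt19_general n H K W₀ hH hW₀ hK hKsq
end
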